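/- Let t ≥ 1 and r be integers, and let c be a real number with 0 < c < 1. Suppose that for every positive integer n, (1/t)(1 − c)·p^L(n) < N(r,t;n) < (1/t)(1 + c)·p^U(n). Let x ≥ 2 be an integer such that for every integer a ≥ x, T_a(1) > log(4a√3 · t · (1+c)/(1−c)²) + log(S_a(1)). Then for all integers a, b ≥ x, N(r,t;a)·N(r,t;b) > N(r,t;a+b). -/

import Mathlib

open Finset

/-- The Dyson rank of a partition: largest part minus number of parts. -/
def Nat.Partition.rank {n : ℕ} (lam : Nat.Partition n) : ℤ :=
  (lam.parts.sup : ℤ) - (Multiset.card lam.parts : ℤ)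

/-- `rankCount r t n` is `N(r,t;n)`, the number of partitions of `n` whose rank is
congruent to `r` modulo `t`. -/
def rankCount (r t : ℤ) (n : ℕ) : ℕ :=
  (Finset.univ.filter (fun lam : Nat.Partition n => lam.rank % t = r % t)).card

/-- Lehmer-type lower bound `p^L(n) = (√3/(12n))(1 - 1/√n) e^{(π/6)√(24n-1)}`. -/
noncomputable def pLow (n : ℕ) : ℝ :=
  Real.sqrt 3 / (12 * n) * (1 - 1 / Real.sqrt n) *
    Real.exp (Real.pi / 6 * Real.sqrt (24 * n - 1))

/-- Lehmer-type upper bound `p^U(n) = (√3/(12n))(1 + 1/√n) e^{(π/6)√(24n-1)}`. -/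
noncomputable def pUp (n : ℕ) : ℝ :=
  Real.sqrt 3 / (12 * n) * (1 + 1 / Real.sqrt n) *
    Real.exp (Real.pi / 6 * Real.sqrt (24 * n - 1))

/-- `S_x(λ)`. -/
noncomputable def Sfun (x lam : ℝ) : ℝ :=
  (1 + 1 / Real.sqrt (x + lam * x)) /
    ((1 - 1 / Real.sqrt x) * (1 - 1 / Real.sqrt (lam * x)))

/-- `T_x(λ)`. -/
noncomputable def Tfun (x lam : ℝ) : ℝ :=
  Real.pi / 6 * (Real.sqrt (24 * x - 1) + Real.sqrt (24 * lam * x - 1) -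
    Real.sqrt (24 * (x + lam * x) - 1))

/-!
With `λ = b/a`, the quotient `p^U(a+b) / (p^L(a) p^L(b))` equals
`4√3 · ab/(a+b) · S_a(λ) · e^{-T_a(λ)}`. For `b ≥ a` we have `ab/(a+b) ≤ a`, `S_a(λ) ≤ S_a(1)`,
and `T_a(λ) ≥ T_a(1)` by concavity of `√`, so the quotient is at most `4a√3 · S_a(1) e^{-T_a(1)}`.
The hypothesis on `T_a(1)` makes this smaller than `(1-c)²/(t(1+c))`, i.e.
`(1/t)(1+c) p^U(a+b) < (1/t)(1-c) p^L(a) · (1/t)(1-c) p^L(b)`, and the assumed bounds on `N(r,t;n)`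
sandwich `N(r,t;a+b)` below and `N(r,t;a) N(r,t;b)` above this inequality.
-/

open Real

noncomputable def mu (x : ℝ) : ℝ :=
  π / 6 * √(24 * x - 1)

lemma sqrt_add_sub_sqrt_le {u v h : ℝ} (hu : 0 ≤ u) (huv : u ≤ v) (hh : 0 ≤ h) :
    √(v + h) - √v ≤ √(u + h) - √u := by
  have hp := sq_sqrt hu
  have hq := sq_sqrt (hu.trans huv)
  have hP := sq_sqrt (add_nonneg hu hh)
  have hQ := sq_sqrt (add_nonneg (hu.trans huv) hh)
  have hpq : √u ≤ √v := sqrt_le_sqrt huv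
  have hPQ : √(u + h) ≤ √(v + h) := sqrt_le_sqrt (by linarith)
  have hpP : √u ≤ √(u + h) := sqrt_le_sqrt (by linarith)
  -- each increment times the matching sum of square roots is `h`, and the sum is larger at `v`
  nlinarith [sqrt_nonneg u, sqrt_nonneg v]

lemma one_sub_one_div_sqrt_pos {x : ℝ} (hx : 1 < x) : 0 < 1 - 1 / √x := by
  have h : 1 < √x := (lt_sqrt zero_le_one).mpr (by linarith)
  rw [sub_pos, div_lt_one (zero_lt_one.trans h)]
  exact h

lemma Tfun_eq (x lam : ℝ) : Tfun x lam = mu x + mu (lam * x) - mu (x + lam * x) := by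
  simp only [Tfun, mu]; ring_nf

lemma Tfun_one_le {x lam : ℝ} (hx : 1 / 24 ≤ x) (hlam : 1 ≤ lam) : Tfun x 1 ≤ Tfun x lam := by
  have key := sqrt_add_sub_sqrt_le (u := 24 * x - 1) (v := 24 * lam * x - 1) (h := 24 * x)
    (by linarith) (by nlinarith) (by linarith)
  rw [show 24 * x - 1 + 24 * x = 24 * (x + 1 * x) - 1 by ring,
    show 24 * lam * x - 1 + 24 * x = 24 * (x + lam * x) - 1 by ring] at key
  unfold Tfun
  gcongr π / 6 * ?_
  rw [mul_one]
  linarith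

lemma Sfun_pos {x lam : ℝ} (hx : 1 < x) (hlam : 1 ≤ lam) : 0 < Sfun x lam := by
  have hv := one_sub_one_div_sqrt_pos hx
  have hv' := one_sub_one_div_sqrt_pos (hx.trans_le (le_mul_of_one_le_left (by linarith) hlam))
  unfold Sfun
  positivity

lemma Sfun_le_Sfun_one {x lam : ℝ} (hx : 1 < x) (hlam : 1 ≤ lam) : Sfun x lam ≤ Sfun x 1 := by
  have hxl : x ≤ lam * x := le_mul_of_one_le_left (by linarith) hlam
  have hv := one_sub_one_div_sqrt_pos hx
  simp only [Sfun, one_mul]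
  gcongr

lemma pLow_eq (n : ℕ) : pLow n = √3 / (12 * n) * (1 - 1 / √n) * exp (mu n) := rfl

lemma pUp_eq (n : ℕ) : pUp n = √3 / (12 * n) * (1 + 1 / √n) * exp (mu n) := rfl

lemma pLow_pos {n : ℕ} (hn : 2 ≤ n) : 0 < pLow n := by
  have hn' : (1 : ℝ) < n := by exact_mod_cast hn
  rw [pLow_eq]
  have := one_sub_one_div_sqrt_pos hn'
  positivity

lemma pUp_add_eq {a b : ℕ} (ha : 2 ≤ a) (hb : 2 ≤ b) :
    pUp (a + b) = 4 * √3 * (a * b / (a + b)) * Sfun a (b / a) * exp (-Tfun a (b / a)) *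
      (pLow a * pLow b) := by
  have ha' : (1 : ℝ) < a := by exact_mod_cast ha
  have hb' : (1 : ℝ) < b := by exact_mod_cast hb
  have hva := (one_sub_one_div_sqrt_pos ha').ne'
  have hvb := (one_sub_one_div_sqrt_pos hb').ne'
  have hlam : (b / a : ℝ) * a = b := div_mul_cancel₀ _ (by positivity)
  rw [Tfun_eq, hlam, exp_neg, exp_sub, exp_add, pUp_eq, pLow_eq, pLow_eq]
  simp only [Sfun, hlam, Nat.cast_add]
  -- hidden from `field_simp`, which would otherwise clear the denominators inside `1 - 1 / √n`
  generalize 1 - 1 / √(a : ℝ) = va at *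
  generalize 1 - 1 / √(b : ℝ) = vb at *
  field_simp
  ring_nf
  rw [sq_sqrt (by norm_num : (0:ℝ) ≤ 3)]
  ring

lemma pUp_add_lt_pLow_mul_pLow {t c : ℝ} (ht : 0 < t) (hc₀ : -1 < c) (hc₁ : c < 1)
    {a b : ℕ} (ha : 2 ≤ a) (hab : a ≤ b)
    (hT : log (4 * a * √3 * t * (1 + c) / (1 - c) ^ 2) + log (Sfun a 1) < Tfun a 1) :
    1 / t * (1 + c) * pUp (a + b) < (1 / t * (1 - c) * pLow a) * (1 / t * (1 - c) * pLow b) := by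
  have ha' : (1 : ℝ) < a := by exact_mod_cast ha
  have hab' : (a : ℝ) ≤ b := by exact_mod_cast hab
  have hlam : 1 ≤ (b / a : ℝ) := (one_le_div (by positivity)).mpr hab'
  have hc : 0 < 1 - c := by linarith
  have hc' : 0 < 1 + c := by linarith
  have hS := Sfun_pos ha' le_rfl
  have hW : 0 < 4 * a * √3 * t * (1 + c) / (1 - c) ^ 2 := by positivity
  have hexp : 4 * a * √3 * t * (1 + c) / (1 - c) ^ 2 * Sfun a 1 < exp (Tfun a 1) :=
    (log_lt_iff_lt_exp (by positivity)).mp (by rwa [log_mul hW.ne' hS.ne'])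
  have hpp : 0 < pLow a * pLow b := mul_pos (pLow_pos ha) (pLow_pos (ha.trans hab))
  calc 1 / t * (1 + c) * pUp (a + b)
      = 1 / t * (1 + c) * 4 * √3 * (a * b / (a + b)) * Sfun a (b / a) *
          exp (-Tfun a (b / a)) * (pLow a * pLow b) := by
        rw [pUp_add_eq ha (ha.trans hab)]; ring
    _ ≤ 1 / t * (1 + c) * 4 * √3 * a * Sfun a 1 * exp (-Tfun a 1) * (pLow a * pLow b) := by
        have hmean : (a * b / (a + b) : ℝ) ≤ a := by
          rw [div_le_iff₀ (by positivity)]; nlinarith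
        have hSlam := Sfun_pos ha' hlam
        gcongr
        · exact Sfun_le_Sfun_one ha' hlam
        · exact Tfun_one_le (by linarith) hlam
    _ = (1 - c) ^ 2 / t ^ 2 * (4 * a * √3 * t * (1 + c) / (1 - c) ^ 2 * Sfun a 1) *
          exp (-Tfun a 1) * (pLow a * pLow b) := by
        field_simp
    _ < (1 - c) ^ 2 / t ^ 2 * exp (Tfun a 1) * exp (-Tfun a 1) * (pLow a * pLow b) := by
        gcongr
    _ = (1 / t * (1 - c) * pLow a) * (1 / t * (1 - c) * pLow b) := by
        rw [exp_neg]; field_simp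

lemma rankCount_add_lt_mul_of_le {t r : ℤ} {c : ℝ} (ht : 1 ≤ t) (hc₀ : -1 < c) (hc₁ : c < 1)
    (hbound : ∀ n : ℕ, 1 ≤ n →
      (1 / (t : ℝ)) * (1 - c) * pLow n < (rankCount r t n : ℝ) ∧
      (rankCount r t n : ℝ) < (1 / (t : ℝ)) * (1 + c) * pUp n)
    {a b : ℕ} (ha : 2 ≤ a) (hab : a ≤ b)
    (hT : log (4 * a * √3 * t * (1 + c) / (1 - c) ^ 2) + log (Sfun a 1) < Tfun a 1) :
    rankCount r t (a + b) < rankCount r t a * rankCount r t b := by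
  have ht' : (0 : ℝ) < t := by exact_mod_cast ht
  have hlow_b : 0 < 1 / (t : ℝ) * (1 - c) * pLow b := by
    have := pLow_pos (ha.trans hab); positivity
  have hN : (rankCount r t (a + b) : ℝ) < rankCount r t a * rankCount r t b :=
    calc (rankCount r t (a + b) : ℝ)
        < 1 / t * (1 + c) * pUp (a + b) := (hbound (a + b) (by omega)).2
      _ < (1 / t * (1 - c) * pLow a) * (1 / t * (1 - c) * pLow b) :=
        pUp_add_lt_pLow_mul_pLow ht' hc₀ hc₁ ha hab hT
      _ ≤ rankCount r t a * rankCount r t b :=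
        mul_le_mul (hbound a (by omega)).1.le (hbound b (by omega)).1.le hlow_b.le
          (Nat.cast_nonneg _)
  exact_mod_cast hN

/-- Abstract convexity lemma: if `(1/t)(1−c)p^L(n) < N(r,t;n) < (1/t)(1+c)p^U(n)` for all
`n ≥ 1`, and `x ≥ 2` is such that `T_a(1) > log(4a√3·t·(1+c)/(1−c)²) + log(S_a(1))` for all
`a ≥ x`, then `N(r,t;a)·N(r,t;b) > N(r,t;a+b)` for all `a, b ≥ x`. -/
theorem convexity_criterion (t : ℤ) (ht : 1 ≤ t) (r : ℤ) (c : ℝ) (hc0 : 0 < c) (hc1 : c < 1)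
    (hbound : ∀ n : ℕ, 1 ≤ n →
      (1 / (t : ℝ)) * (1 - c) * pLow n < (rankCount r t n : ℝ) ∧
      (rankCount r t n : ℝ) < (1 / (t : ℝ)) * (1 + c) * pUp n)
    (x : ℕ) (hx : 2 ≤ x)
    (hT : ∀ a : ℕ, x ≤ a →
      Tfun a 1 >
        Real.log (4 * a * Real.sqrt 3 * t * (1 + c) / (1 - c) ^ 2) + Real.log (Sfun a 1)) :
    ∀ a b : ℕ, x ≤ a → x ≤ b →
      rankCount r t a * rankCount r t b > rankCount r t (a + b) := by
  have hc₀ : -1 < c := by linarith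
  intro a b ha hb
  rcases le_total a b with hab | hba
  · exact rankCount_add_lt_mul_of_le ht hc₀ hc1 hbound (hx.trans ha) hab (hT a ha)
  · rw [add_comm, mul_comm]
    exact rankCount_add_lt_mul_of_le ht hc₀ hc1 hbound (hx.trans hb) hba (hT b hb)
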